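/- Let X₀ and Y be nonnegative real random variables on a common probability space, with X₀ integrable, and let σ² > 0. Then E[ ln( 1 + X₀/(Y + σ²) ) ] = ∫_0^∞ ( E[e^{−t Y}] − E[e^{−t (X₀ + Y)}] ) · e^{−σ² t} / t dt, where both sides are finite. -/

import Mathlib

/-!
For `0 < a ≤ b`, Frullani's integral gives `log (b / a) = ∫₀^∞ (e^{-a t} - e^{-b t}) / t dt`,
with a nonnegative integrand. Taking `a = Y + σ²` and `b = X₀ + Y + σ²` pointwise, the
expectation of the left side is at most `E[X₀] / σ² < ∞`, so Tonelli makes the kernel integrable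
on `Ω × (0, ∞)` and Fubini lets us exchange the expectation with the `t`-integral; finally
`e^{-(Z + σ²) t} = e^{-t Z} e^{-σ² t}`.
-/

open MeasureTheory ProbabilityTheory Real Set Filter

lemma exp_neg_mul_sub_exp_neg_mul_div_le {a b t : ℝ} (ht : 0 < t) :
    (exp (-a * t) - exp (-b * t)) / t ≤ (b - a) * exp (-a * t) := by
  have h : exp (-a * t) * (1 - (b - a) * t) ≤ exp (-b * t) := by
    calc exp (-a * t) * (1 - (b - a) * t) ≤ exp (-a * t) * exp (-((b - a) * t)) := by
          gcongr; linarith [add_one_le_exp (-((b - a) * t))]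
      _ = exp (-b * t) := by rw [← exp_add]; ring_nf
  rw [div_le_iff₀ ht]
  nlinarith

lemma exp_neg_mul_sub_exp_neg_mul_div_nonneg {a b t : ℝ} (hab : a ≤ b) (ht : 0 ≤ t) :
    0 ≤ (exp (-a * t) - exp (-b * t)) / t := by
  have : -b * t ≤ -a * t := by nlinarith
  exact div_nonneg (sub_nonneg.2 (exp_le_exp.2 this)) ht

lemma integrableOn_exp_neg_mul_sub_exp_neg_mul_div {a b : ℝ} (ha : 0 < a) (hb : 0 < b) :
    IntegrableOn (fun t => (exp (-a * t) - exp (-b * t)) / t) (Ioi 0) := by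
  wlog hab : a ≤ b generalizing a b
  · convert (this hb ha (le_of_not_ge hab)).neg using 1
    ext t
    simp only [Pi.neg_apply]
    ring
  refine ((exp_neg_integrableOn_Ioi 0 ha).const_mul (b - a)).mono'
    (by fun_prop : Measurable _).aestronglyMeasurable ?_
  refine (ae_restrict_iff' measurableSet_Ioi).2 (Eventually.of_forall fun t ht => ?_)
  rw [norm_of_nonneg (exp_neg_mul_sub_exp_neg_mul_div_nonneg hab (le_of_lt ht))]
  exact exp_neg_mul_sub_exp_neg_mul_div_le ht

lemma integral_exp_neg_mul_sub_exp_neg_mul_div {a b : ℝ} (ha : 0 < a) (hb : 0 < b) :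
    ∫ t in Ioi 0, (exp (-a * t) - exp (-b * t)) / t = log (b / a) := by
  have h := Frullani.integral_Ioi_eq (f := fun x => exp (-x)) (L := 1) (R := 0)
    ((by fun_prop : Continuous fun x => exp (-x)).locallyIntegrable.locallyIntegrableOn _) ha hb
    ?_ tendsto_exp_neg_atTop_nhds_zero ?_
  · simpa [div_eq_inv_mul, neg_mul] using h
  · simpa using
      ((by fun_prop : Continuous fun x => exp (-x)).tendsto 0).mono_left nhdsWithin_le_nhds
  · simpa [div_eq_inv_mul, neg_mul] using integrableOn_exp_neg_mul_sub_exp_neg_mul_div ha hb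

section Expectation

variable {Ω : Type*} [MeasurableSpace Ω] {μ : Measure Ω} {A B : Ω → ℝ}

lemma integrable_exp_neg_mul_of_nonneg [IsFiniteMeasure μ] {Z : Ω → ℝ} (hZ : AEMeasurable Z μ)
    (hZ0 : ∀ ω, 0 ≤ Z ω) {t : ℝ} (ht : 0 ≤ t) : Integrable (fun ω => exp (-Z ω * t)) μ := by
  refine (integrable_const (1 : ℝ)).mono' (by fun_prop) (Eventually.of_forall fun ω => ?_)
  rw [norm_of_nonneg (exp_pos _).le, exp_le_one_iff]
  nlinarith [hZ0 ω]

lemma integrable_prod_exp_neg_mul_sub_exp_neg_mul_div [SFinite μ] (hA : AEMeasurable A μ)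
    (hB : AEMeasurable B μ) (hA0 : ∀ ω, 0 < A ω) (hAB : ∀ ω, A ω ≤ B ω)
    (hlog : Integrable (fun ω => log (B ω / A ω)) μ) :
    Integrable (fun p : Ω × ℝ => (exp (-A p.1 * p.2) - exp (-B p.1 * p.2)) / p.2)
      (μ.prod (volume.restrict (Ioi 0))) := by
  have hA' := hA.comp_fst (ν := volume.restrict (Ioi (0 : ℝ)))
  have hB' := hB.comp_fst (ν := volume.restrict (Ioi (0 : ℝ)))
  refine (integrable_prod_iff (by fun_prop : AEMeasurable _ _).aestronglyMeasurable).2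
    ⟨Eventually.of_forall fun ω =>
      integrableOn_exp_neg_mul_sub_exp_neg_mul_div (hA0 ω) ((hA0 ω).trans_le (hAB ω)), ?_⟩
  refine hlog.congr (Eventually.of_forall fun ω => ?_)
  dsimp only
  rw [← integral_exp_neg_mul_sub_exp_neg_mul_div (hA0 ω) ((hA0 ω).trans_le (hAB ω))]
  refine setIntegral_congr_fun measurableSet_Ioi fun t ht => ?_
  exact (norm_of_nonneg (exp_neg_mul_sub_exp_neg_mul_div_nonneg (hAB ω) (le_of_lt ht))).symm

lemma integral_exp_neg_mul_sub_exp_neg_mul_div_eq [IsFiniteMeasure μ] (hA : AEMeasurable A μ)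
    (hB : AEMeasurable B μ) (hA0 : ∀ ω, 0 < A ω) (hAB : ∀ ω, A ω ≤ B ω) {t : ℝ} (ht : 0 ≤ t) :
    ∫ ω, (exp (-A ω * t) - exp (-B ω * t)) / t ∂μ
      = ((∫ ω, exp (-A ω * t) ∂μ) - ∫ ω, exp (-B ω * t) ∂μ) / t := by
  have hB0 : ∀ ω, 0 ≤ B ω := fun ω => (hA0 ω).le.trans (hAB ω)
  rw [integral_div, integral_sub (integrable_exp_neg_mul_of_nonneg hA (fun ω => (hA0 ω).le) ht)
    (integrable_exp_neg_mul_of_nonneg hB hB0 ht)]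

lemma integrableOn_integral_exp_neg_mul_sub_exp_neg_mul_div [IsFiniteMeasure μ]
    (hA : AEMeasurable A μ) (hB : AEMeasurable B μ) (hA0 : ∀ ω, 0 < A ω) (hAB : ∀ ω, A ω ≤ B ω)
    (hlog : Integrable (fun ω => log (B ω / A ω)) μ) :
    IntegrableOn (fun t : ℝ => ((∫ ω, exp (-A ω * t) ∂μ) - ∫ ω, exp (-B ω * t) ∂μ) / t) (Ioi 0) :=
  (integrable_prod_exp_neg_mul_sub_exp_neg_mul_div hA hB hA0 hAB hlog).integral_prod_right.congr
    ((ae_restrict_iff' measurableSet_Ioi).2 (Eventually.of_forall fun _ ht =>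
      integral_exp_neg_mul_sub_exp_neg_mul_div_eq hA hB hA0 hAB (le_of_lt ht)))

theorem integral_log_div_eq_integral_exp_neg_mul_sub_exp_neg_mul_div [IsFiniteMeasure μ]
    (hA : AEMeasurable A μ) (hB : AEMeasurable B μ) (hA0 : ∀ ω, 0 < A ω) (hAB : ∀ ω, A ω ≤ B ω)
    (hlog : Integrable (fun ω => log (B ω / A ω)) μ) :
    ∫ ω, log (B ω / A ω) ∂μ
      = ∫ t in Ioi 0, ((∫ ω, exp (-A ω * t) ∂μ) - ∫ ω, exp (-B ω * t) ∂μ) / t :=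
  calc ∫ ω, log (B ω / A ω) ∂μ
      = ∫ ω, (∫ t in Ioi 0, (exp (-A ω * t) - exp (-B ω * t)) / t) ∂μ :=
        integral_congr_ae (Eventually.of_forall fun ω =>
          (integral_exp_neg_mul_sub_exp_neg_mul_div (hA0 ω) ((hA0 ω).trans_le (hAB ω))).symm)
    _ = ∫ t in Ioi 0, ∫ ω, (exp (-A ω * t) - exp (-B ω * t)) / t ∂μ :=
        integral_integral_swap (integrable_prod_exp_neg_mul_sub_exp_neg_mul_div hA hB hA0 hAB hlog)
    _ = _ := setIntegral_congr_fun measurableSet_Ioi fun _ ht =>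
        integral_exp_neg_mul_sub_exp_neg_mul_div_eq hA hB hA0 hAB (le_of_lt ht)

lemma integrable_log_one_add_div_add {X Y : Ω → ℝ} {s : ℝ} (hX : Integrable X μ)
    (hY : AEMeasurable Y μ) (hX0 : ∀ ω, 0 ≤ X ω) (hY0 : ∀ ω, 0 ≤ Y ω) (hs : 0 < s) :
    Integrable (fun ω => log (1 + X ω / (Y ω + s))) μ := by
  have hX' := hX.aemeasurable
  refine (hX.div_const s).mono' (by fun_prop : AEMeasurable _ _).aestronglyMeasurable
    (Eventually.of_forall fun ω => ?_)
  have hu : 0 ≤ X ω / (Y ω + s) := div_nonneg (hX0 ω) (by linarith [hY0 ω])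
  rw [norm_of_nonneg (log_nonneg (by linarith))]
  calc log (1 + X ω / (Y ω + s)) ≤ X ω / (Y ω + s) := by
        linarith [log_le_sub_one_of_pos (by linarith : 0 < 1 + X ω / (Y ω + s))]
    _ ≤ X ω / s := div_le_div_of_nonneg_left (hX0 ω) hs (by linarith [hY0 ω])

end Expectation

theorem stmt_12_general {Ω : Type*} [MeasureSpace Ω] [IsProbabilityMeasure (ℙ : Measure Ω)]
    (X₀ Y : Ω → ℝ) (hY_meas : Measurable Y)
    (hX₀_nonneg : ∀ ω, 0 ≤ X₀ ω) (hY_nonneg : ∀ ω, 0 ≤ Y ω)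
    (hX₀_int : Integrable X₀ ℙ)
    (s : ℝ) (hs : 0 < s) :
    Integrable (fun ω => Real.log (1 + X₀ ω / (Y ω + s))) ℙ ∧
    IntegrableOn
      (fun t => ((∫ ω, Real.exp (-t * Y ω)) - ∫ ω, Real.exp (-t * (X₀ ω + Y ω)))
        * Real.exp (-s * t) / t) (Set.Ioi (0 : ℝ)) volume ∧
    ∫ ω, Real.log (1 + X₀ ω / (Y ω + s))
      = ∫ t in Set.Ioi (0 : ℝ),
          ((∫ ω, Real.exp (-t * Y ω)) - ∫ ω, Real.exp (-t * (X₀ ω + Y ω)))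
            * Real.exp (-s * t) / t := by
  have hA : AEMeasurable (fun ω => Y ω + s) := hY_meas.aemeasurable.add_const s
  have hB : AEMeasurable (fun ω => X₀ ω + Y ω + s) :=
    (hX₀_int.aemeasurable.add hY_meas.aemeasurable).add_const s
  have hA0 : ∀ ω, 0 < Y ω + s := fun ω => by linarith [hY_nonneg ω]
  have hAB : ∀ ω, Y ω + s ≤ X₀ ω + Y ω + s := fun ω => by linarith [hX₀_nonneg ω]
  have hlog_eq : (fun ω => log (1 + X₀ ω / (Y ω + s)))
      = fun ω => log ((X₀ ω + Y ω + s) / (Y ω + s)) := by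
    funext ω
    rw [one_add_div (hA0 ω).ne']
    ring_nf
  have hshift : ∀ (Z : Ω → ℝ) (t : ℝ),
      ∫ ω, exp (-(Z ω + s) * t) = (∫ ω, exp (-t * Z ω)) * exp (-s * t) := by
    intro Z t
    rw [← integral_mul_const]
    congr 1 with ω
    rw [← exp_add]
    ring_nf
  have hkernel : (fun t => ((∫ ω, exp (-(Y ω + s) * t)) - ∫ ω, exp (-(X₀ ω + Y ω + s) * t)) / t)
      = fun t => ((∫ ω, exp (-t * Y ω)) - ∫ ω, exp (-t * (X₀ ω + Y ω))) * exp (-s * t) / t := by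
    funext t
    rw [hshift Y, hshift (fun ω => X₀ ω + Y ω), sub_mul]
  have hlog := integrable_log_one_add_div_add hX₀_int hY_meas.aemeasurable hX₀_nonneg hY_nonneg hs
  rw [hlog_eq] at hlog ⊢
  rw [← hkernel]
  exact ⟨hlog, integrableOn_integral_exp_neg_mul_sub_exp_neg_mul_div hA hB hA0 hAB hlog,
    integral_log_div_eq_integral_exp_neg_mul_sub_exp_neg_mul_div hA hB hA0 hAB hlog⟩

/-- For nonnegative random variables `X₀` (integrable) and `Y` on a common
probability space and noise power `s = σ² > 0`,
`E[ln (1 + X₀ / (Y + s))] = ∫_0^∞ (E[e^{-t Y}] - E[e^{-t (X₀ + Y)}]) e^{-s t} / t dt`,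
and both sides are finite (integrable). -/
theorem stmt_12 {Ω : Type*} [MeasureSpace Ω] [IsProbabilityMeasure (ℙ : Measure Ω)]
    (X₀ Y : Ω → ℝ) (hX₀_meas : Measurable X₀) (hY_meas : Measurable Y)
    (hX₀_nonneg : ∀ ω, 0 ≤ X₀ ω) (hY_nonneg : ∀ ω, 0 ≤ Y ω)
    (hX₀_int : Integrable X₀ ℙ)
    (s : ℝ) (hs : 0 < s) :
    Integrable (fun ω => Real.log (1 + X₀ ω / (Y ω + s))) ℙ ∧
    IntegrableOn
      (fun t => ((∫ ω, Real.exp (-t * Y ω)) - ∫ ω, Real.exp (-t * (X₀ ω + Y ω)))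
        * Real.exp (-s * t) / t) (Set.Ioi (0 : ℝ)) volume ∧
    ∫ ω, Real.log (1 + X₀ ω / (Y ω + s))
      = ∫ t in Set.Ioi (0 : ℝ),
          ((∫ ω, Real.exp (-t * Y ω)) - ∫ ω, Real.exp (-t * (X₀ ω + Y ω)))
            * Real.exp (-s * t) / t :=
  stmt_12_general X₀ Y hY_meas hX₀_nonneg hY_nonneg hX₀_int s hs
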